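/- The number of matchings on [2n] whose sock number is at most 2 equals 3^{n−1} for n ≥ 1, where the sock number of a matching M is max_k x_k(M). -/

import Mathlib

open Finset
open scoped Classical

/-- An `r`-matching on `[r*n] = {1,...,r*n}`: a partition of `Finset.Icc 1 (r*n)`
into `r`-element blocks. -/
def IsRMatching (r n : ℕ) (M : Finset (Finset ℕ)) : Prop :=
  (∀ e ∈ M, e.card = r) ∧
  (∀ e ∈ M, ∀ f ∈ M, e ≠ f → Disjoint e f) ∧
  M.biUnion id = Finset.Icc 1 (r * n)

/-- The finite set of all `r`-matchings on `[r*n]`. -/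
noncomputable def matchings (r n : ℕ) : Finset (Finset (Finset ℕ)) :=
  ((Finset.Icc 1 (r * n)).powerset.powerset).filter (IsRMatching r n)

/-- `x_k(M) = Σ_{e ∈ M_k} |e ∩ [k]|`, summed over blocks `e` meeting both `[k]`
and its complement. -/
noncomputable def sockAt (k : ℕ) (M : Finset (Finset ℕ)) : ℕ :=
  ∑ e ∈ M.filter
      (fun e => (e ∩ Finset.Icc 1 k).Nonempty ∧ (e \ Finset.Icc 1 k).Nonempty),
    (e ∩ Finset.Icc 1 k).card

/-- For `r = 2`: the number of edges with one endpoint in `[k]` and one outside. -/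
noncomputable def crossAt (k : ℕ) (M : Finset (Finset ℕ)) : ℕ :=
  (M.filter
      (fun e => (e ∩ Finset.Icc 1 k).Nonempty ∧ (e \ Finset.Icc 1 k).Nonempty)).card

/-- The sock number of a matching on `[2n]`: `max_{1 ≤ k ≤ 2n} x_k(M)`. -/
noncomputable def sockNum (n : ℕ) (M : Finset (Finset ℕ)) : ℕ :=
  (Finset.Icc 1 (2 * n)).sup (fun k => crossAt k M)

/-!
For `n ≥ 2`, each block through `1, 2` or `3` either crosses the cut at `3` (meeting `{1, 2, 3}`
in one point) or lies inside `{1, 2, 3}`; if that cut is crossed at most twice, some block lies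
inside, i.e. is one of the three arcs `{1, 2, 3} \ {a}`. Deleting that arc and relabelling the
remaining points increasingly by `[2n-2]` moves each cut `k + 2` to the cut `k`, while a cut
`k ≤ 2` is crossed at most `k` times anyway. So each of the three classes is in bijection with
the matchings on `[2n-2]` of sock number at most `2`, and the count triples at each step from
the single matching on `[2]`.
-/

section BlockPartition

variable {α β : Type*} [DecidableEq α] [DecidableEq β]

theorem Finset.image_image_of_leftInvOn {f : α → β} {g : β → α} {s : Finset α}
    (h : Set.LeftInvOn g f s) : (s.image f).image g = s :=
  coe_injective <| by push_cast; exact h.image_image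

def IsBlockPartition (r : ℕ) (A : Finset α) (M : Finset (Finset α)) : Prop :=
  (∀ e ∈ M, e.card = r) ∧ (M : Set (Finset α)).PairwiseDisjoint id ∧ M.biUnion id = A

namespace IsBlockPartition

variable {r : ℕ} {A S p : Finset α} {M : Finset (Finset α)}

theorem subset (h : IsBlockPartition r A M) {e : Finset α} (he : e ∈ M) : e ⊆ A :=
  h.2.2 ▸ subset_biUnion_of_mem id he

theorem image {f : α → β} (h : IsBlockPartition r A M) (hf : Set.InjOn f A) :
    IsBlockPartition r (A.image f) (M.image (image f)) := by
  refine ⟨?_, ?_, ?_⟩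
  · intro e' he'
    obtain ⟨e, he, rfl⟩ := mem_image.1 he'
    rw [card_image_of_injOn (hf.mono (h.subset he)), h.1 e he]
  · intro _ hx _ hy hne
    obtain ⟨e, he, rfl⟩ := mem_image.1 hx
    obtain ⟨e', he', rfl⟩ := mem_image.1 hy
    have hee' : Disjoint e e' := h.2.1 he he' (by rintro rfl; exact hne rfl)
    have hinj : Set.InjOn f (↑e ∪ ↑e') :=
      hf.mono (Set.union_subset (coe_subset.2 (h.subset he)) (coe_subset.2 (h.subset he')))
    rw [Function.onFun, id, id, disjoint_iff_inter_eq_empty, ← image_inter_of_injOn _ _ hinj,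
      disjoint_iff_inter_eq_empty.1 hee', image_empty]
  · rw [image_biUnion, ← h.2.2, biUnion_image]
    rfl

theorem insert (h : IsBlockPartition r A M) (hp : p.card = r) (hpA : Disjoint p A) :
    IsBlockPartition r (p ∪ A) (insert p M) := by
  refine ⟨?_, ?_, by rw [biUnion_insert, h.2.2]; rfl⟩
  · simpa [hp] using h.1
  · rw [coe_insert]
    refine h.2.1.insert fun e he _ => ?_
    exact hpA.mono_right (h.subset he)

theorem erase (h : IsBlockPartition r A M) (hp : p ∈ M) :
    IsBlockPartition r (A \ p) (M.erase p) := by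
  refine ⟨fun e he => h.1 e (mem_of_mem_erase he), h.2.1.subset (by simp), ?_⟩
  have hdisj : Disjoint p ((M.erase p).biUnion id) :=
    (disjoint_biUnion_right _ _ _).2 fun e he =>
      h.2.1 hp (mem_of_mem_erase he) (ne_of_mem_erase he).symm
  conv_rhs => rw [← h.2.2, ← insert_erase hp, biUnion_insert]
  exact (union_sdiff_cancel_left hdisj).symm

theorem eq_singleton (h : IsBlockPartition A.card A M) (hA : A.Nonempty) : M = {A} := by
  have hblock : ∀ e ∈ M, e = A := fun e he =>
    eq_of_subset_of_card_le (h.subset he) (h.1 e he).ge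
  obtain ⟨x, hx⟩ := hA
  obtain ⟨e, he, -⟩ := mem_biUnion.1 (h.2.2 ▸ hx)
  exact eq_singleton_iff_unique_mem.2 ⟨hblock e he ▸ he, hblock⟩

theorem sum_card_inter (h : IsBlockPartition r A M) (hS : S ⊆ A) :
    ∑ e ∈ M, (e ∩ S).card = S.card := by
  have hdisj : (M : Set (Finset α)).PairwiseDisjoint (· ∩ S) :=
    h.2.1.mono fun e => inter_subset_left
  rw [← card_biUnion hdisj, ← biUnion_inter]
  change (M.biUnion id ∩ S).card = S.card
  rw [h.2.2, inter_eq_right.2 hS]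

end IsBlockPartition

theorem isBlockPartition_singleton (A : Finset α) : IsBlockPartition A.card A {A} :=
  ⟨by simp, by simp, by simp⟩

end BlockPartition

theorem isRMatching_iff {r n : ℕ} {M : Finset (Finset ℕ)} :
    IsRMatching r n M ↔ IsBlockPartition r (Icc 1 (r * n)) M :=
  Iff.rfl

theorem mem_matchings {r n : ℕ} {M : Finset (Finset ℕ)} :
    M ∈ matchings r n ↔ IsRMatching r n M := by
  refine ⟨fun h => (mem_filter.1 h).2, fun h => mem_filter.2 ⟨?_, h⟩⟩
  exact mem_powerset.2 fun e he => mem_powerset.2 ((isRMatching_iff.1 h).subset he)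

theorem IsRMatching.one_le {r n : ℕ} {M : Finset (Finset ℕ)} (h : IsRMatching r n M)
    {x : ℕ} (hx : x ∈ M.biUnion id) : 1 ≤ x :=
  (mem_Icc.1 (h.2.2 ▸ hx)).1

section Crossing

variable {M : Finset (Finset ℕ)}

theorem crossAt_le (hM : (M : Set (Finset ℕ)).PairwiseDisjoint id) (k : ℕ) :
    crossAt k M ≤ k := by
  set C := M.filter fun e => (e ∩ Icc 1 k).Nonempty ∧ (e \ Icc 1 k).Nonempty
  have hC : (C : Set (Finset ℕ)).PairwiseDisjoint (· ∩ Icc 1 k) :=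
    (hM.subset (coe_subset.2 (filter_subset _ _))).mono fun e => inter_subset_left
  calc crossAt k M = C.card := rfl
    _ ≤ (C.biUnion (· ∩ Icc 1 k)).card :=
      card_le_card_biUnion hC fun e he => (mem_filter.1 he).2.1
    _ ≤ (Icc 1 k).card := card_le_card (biUnion_subset.2 fun e _ => inter_subset_right)
    _ = k := by simp

theorem sockNum_le (hM : (M : Set (Finset ℕ)).PairwiseDisjoint id) (n : ℕ) :
    sockNum n M ≤ 2 * n :=
  Finset.sup_le fun k hk => (crossAt_le hM k).trans (mem_Icc.1 hk).2

theorem crossAt_insert_of_subset {p : Finset ℕ} {k : ℕ} (hp : p ⊆ Icc 1 k) :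
    crossAt k (insert p M) = crossAt k M := by
  unfold crossAt
  rw [filter_insert, if_neg]
  rintro ⟨-, x, hx⟩
  exact (mem_sdiff.1 hx).2 (hp (mem_sdiff.1 hx).1)

theorem crossAt_image {f : ℕ → ℕ} {k l : ℕ} (hf : Set.InjOn f (M.biUnion id))
    (hfkl : ∀ x ∈ M.biUnion id, f x ∈ Icc 1 l ↔ x ∈ Icc 1 k) :
    crossAt l (M.image (image f)) = crossAt k M := by
  unfold crossAt
  rw [filter_image, card_image_of_injOn
    ((injOn_image_of_biUnion_injOn hf).mono (coe_subset.2 (filter_subset _ _)))]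
  congr 1
  refine filter_congr fun e he => ?_
  have hmem : ∀ x ∈ e, f x ∈ Icc 1 l ↔ x ∈ Icc 1 k :=
    fun x hx => hfkl x (mem_biUnion.2 ⟨e, he, hx⟩)
  simp only [Finset.Nonempty, mem_inter, mem_sdiff, mem_image]
  constructor
  · rintro ⟨⟨_, ⟨x, hx, rfl⟩, hxl⟩, ⟨_, ⟨y, hy, rfl⟩, hyl⟩⟩
    exact ⟨⟨x, hx, (hmem x hx).1 hxl⟩, ⟨y, hy, fun h => hyl ((hmem y hy).2 h)⟩⟩
  · rintro ⟨⟨x, hx, hxk⟩, ⟨y, hy, hyk⟩⟩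
    exact ⟨⟨f x, ⟨x, hx, rfl⟩, (hmem x hx).2 hxk⟩,
      ⟨f y, ⟨y, hy, rfl⟩, fun h => hyk ((hmem y hy).1 h)⟩⟩

end Crossing

section InitialArc

def initialArc (a : ℕ) : Finset ℕ := (Icc 1 3).erase a

/-- The increasing bijection from `[2n]` onto `[2n+2] \ initialArc a`; it moves every cut
`k ≥ 1` to `k + 2`. -/
def liftLabel (a j : ℕ) : ℕ := if j = 1 then a else j + 2

def lowerLabel (a x : ℕ) : ℕ := if x = a then 1 else x - 2

variable {a : ℕ}

theorem card_initialArc (ha : a ∈ Icc 1 3) : (initialArc a).card = 2 := by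
  rw [initialArc, card_erase_of_mem ha]
  rfl

theorem initialArc_subset_Icc {m : ℕ} (hm : 3 ≤ m) : initialArc a ⊆ Icc 1 m :=
  (erase_subset _ _).trans (Icc_subset_Icc le_rfl hm)

theorem exists_eq_initialArc {e : Finset ℕ} (he : e ⊆ Icc 1 3) (he2 : e.card = 2) :
    ∃ a ∈ Icc 1 3, e = initialArc a := by
  have key : ∀ e ∈ (Icc 1 3).powersetCard 2, ∃ a ∈ Icc 1 3, e = initialArc a := by decide
  exact key e (mem_powersetCard.2 ⟨he, he2⟩)

theorem initialArc_injOn : Set.InjOn initialArc ↑(Icc 1 3) := by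
  have key : ∀ a ∈ Icc 1 3, ∀ b ∈ Icc 1 3, initialArc a = initialArc b → a = b := by decide
  exact fun a ha b hb => key a ha b hb

theorem not_disjoint_initialArc {b : ℕ} (ha : a ∈ Icc 1 3) (hb : b ∈ Icc 1 3) :
    ¬Disjoint (initialArc a) (initialArc b) := by
  have key : ∀ a ∈ Icc 1 3, ∀ b ∈ Icc 1 3, ¬Disjoint (initialArc a) (initialArc b) := by decide
  exact key a ha b hb

theorem leftInvOn_lowerLabel_liftLabel (ha : a ∈ Icc 1 3) :
    Set.LeftInvOn (lowerLabel a) (liftLabel a) (Set.Ici 1) := by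
  intro j hj
  simp only [Set.mem_Ici, mem_Icc] at hj ha
  unfold lowerLabel liftLabel
  split_ifs <;> omega

theorem leftInvOn_liftLabel_lowerLabel (m : ℕ) :
    Set.LeftInvOn (liftLabel a) (lowerLabel a) ↑(Icc 1 m \ initialArc a) := by
  intro x hx
  simp only [mem_coe, mem_sdiff, initialArc, mem_erase, mem_Icc] at hx
  unfold lowerLabel liftLabel
  split_ifs <;> omega

theorem liftLabel_notMem_initialArc {j : ℕ} (hj : 1 ≤ j) : liftLabel a j ∉ initialArc a := by
  simp only [initialArc, mem_erase, mem_Icc, liftLabel]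
  split_ifs <;> omega

theorem image_liftLabel_Icc (ha : a ∈ Icc 1 3) {n : ℕ} (hn : 1 ≤ n) :
    (Icc 1 (2 * n)).image (liftLabel a) = Icc 1 (2 * (n + 1)) \ initialArc a := by
  rw [mem_Icc] at ha
  ext x
  simp only [mem_image, mem_Icc, mem_sdiff, initialArc, mem_erase, liftLabel]
  constructor
  · rintro ⟨j, hj, rfl⟩
    split_ifs <;> omega
  · intro hx
    refine ⟨if x = a then 1 else x - 2, ?_, ?_⟩ <;> split_ifs <;> omega

theorem liftLabel_mem_Icc_iff (ha : a ∈ Icc 1 3) {j k : ℕ} (hj : 1 ≤ j) (hk : 1 ≤ k) :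
    liftLabel a j ∈ Icc 1 (k + 2) ↔ j ∈ Icc 1 k := by
  rw [mem_Icc] at ha
  simp only [mem_Icc, liftLabel]
  split_ifs <;> omega

end InitialArc

section Transfer

def addInitialArc (a : ℕ) (M : Finset (Finset ℕ)) : Finset (Finset ℕ) :=
  insert (initialArc a) (M.image (image (liftLabel a)))

def removeInitialArc (a : ℕ) (M : Finset (Finset ℕ)) : Finset (Finset ℕ) :=
  (M.erase (initialArc a)).image (image (lowerLabel a))

variable {a n : ℕ} {M : Finset (Finset ℕ)}

theorem image_image_lowerLabel_liftLabel (ha : a ∈ Icc 1 3)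
    (hM : ∀ x ∈ M.biUnion id, 1 ≤ x) :
    (M.image (image (liftLabel a))).image (image (lowerLabel a)) = M := by
  refine image_image_of_leftInvOn fun e he => image_image_of_leftInvOn ?_
  exact (leftInvOn_lowerLabel_liftLabel ha).mono fun x hx =>
    hM x (mem_biUnion.2 ⟨e, he, hx⟩)

theorem isRMatching_addInitialArc (ha : a ∈ Icc 1 3) (hn : 1 ≤ n) (hM : IsRMatching 2 n M) :
    IsRMatching 2 (n + 1) (addInitialArc a M) := by
  have hinj : Set.InjOn (liftLabel a) (Icc 1 (2 * n)) :=
    (leftInvOn_lowerLabel_liftLabel ha).injOn.mono fun j hj => (mem_Icc.1 hj).1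
  have h := (isRMatching_iff.1 hM).image hinj
  rw [image_liftLabel_Icc ha hn] at h
  have h' := h.insert (card_initialArc ha) disjoint_sdiff
  rwa [union_sdiff_of_subset (initialArc_subset_Icc (by omega))] at h'

theorem isRMatching_removeInitialArc (ha : a ∈ Icc 1 3) (hn : 1 ≤ n)
    (hM : IsRMatching 2 (n + 1) M) (hp : initialArc a ∈ M) :
    IsRMatching 2 n (removeInitialArc a M) := by
  have hinj : Set.InjOn (lowerLabel a) ↑(Icc 1 (2 * (n + 1)) \ initialArc a) :=
    (leftInvOn_liftLabel_lowerLabel _).injOn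
  have h := ((isRMatching_iff.1 hM).erase hp).image hinj
  have hleft : Set.LeftInvOn (lowerLabel a) (liftLabel a) (Icc 1 (2 * n)) :=
    (leftInvOn_lowerLabel_liftLabel ha).mono fun j hj => (mem_Icc.1 hj).1
  rwa [← image_liftLabel_Icc ha hn, image_image_of_leftInvOn hleft] at h

theorem removeInitialArc_addInitialArc (ha : a ∈ Icc 1 3) (hM : IsRMatching 2 n M) :
    removeInitialArc a (addInitialArc a M) = M := by
  have hp : initialArc a ∉ M.image (image (liftLabel a)) := by
    intro hp
    obtain ⟨e, he, hpe⟩ := mem_image.1 hp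
    obtain ⟨x, hx⟩ := card_pos.1 (by rw [card_initialArc ha]; exact two_pos)
    obtain ⟨j, hj, rfl⟩ := mem_image.1 (hpe ▸ hx)
    exact liftLabel_notMem_initialArc (hM.one_le (mem_biUnion.2 ⟨e, he, hj⟩)) hx
  rw [removeInitialArc, addInitialArc, erase_insert hp,
    image_image_lowerLabel_liftLabel ha fun x hx => hM.one_le hx]

theorem addInitialArc_removeInitialArc (hM : IsRMatching 2 (n + 1) M) (hp : initialArc a ∈ M) :
    addInitialArc a (removeInitialArc a M) = M := by
  have hblock := (isRMatching_iff.1 hM).erase hp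
  have hleft :
      Set.LeftInvOn (image (liftLabel a)) (image (lowerLabel a)) (M.erase (initialArc a)) :=
    fun e he => image_image_of_leftInvOn
      ((leftInvOn_liftLabel_lowerLabel _).mono (coe_subset.2 (hblock.subset he)))
  rw [addInitialArc, removeInitialArc, image_image_of_leftInvOn hleft, insert_erase hp]

theorem crossAt_addInitialArc (ha : a ∈ Icc 1 3) (hM : IsRMatching 2 n M) {k : ℕ}
    (hk : 1 ≤ k) :
    crossAt (k + 2) (addInitialArc a M) = crossAt k M := by
  have hpos : ∀ x ∈ M.biUnion id, 1 ≤ x := fun x hx => hM.one_le hx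
  rw [addInitialArc, crossAt_insert_of_subset (initialArc_subset_Icc (by omega))]
  exact crossAt_image ((leftInvOn_lowerLabel_liftLabel ha).injOn.mono fun x hx => hpos x hx)
    fun x hx => liftLabel_mem_Icc_iff ha (hpos x hx) hk

theorem sockNum_addInitialArc_le_two_iff (ha : a ∈ Icc 1 3) (hn : 1 ≤ n)
    (hM : IsRMatching 2 n M) :
    sockNum (n + 1) (addInitialArc a M) ≤ 2 ↔ sockNum n M ≤ 2 := by
  have hdisj := (isRMatching_iff.1 (isRMatching_addInitialArc ha hn hM)).2.1
  simp only [sockNum, Finset.sup_le_iff, mem_Icc]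
  constructor
  · intro h k hk
    rw [← crossAt_addInitialArc ha hM hk.1]
    exact h (k + 2) ⟨by omega, by omega⟩
  · intro h k hk
    rcases le_or_gt k 2 with hk2 | hk2
    · exact (crossAt_le hdisj k).trans hk2
    · obtain ⟨j, rfl⟩ : ∃ j, k = j + 2 := ⟨k - 2, by omega⟩
      rw [crossAt_addInitialArc ha hM (by omega)]
      exact h j ⟨by omega, by omega⟩

end Transfer

noncomputable def matchingsSockLeTwo (n : ℕ) : Finset (Finset (Finset ℕ)) :=
  (matchings 2 n).filter fun M => sockNum n M ≤ 2

theorem mem_matchingsSockLeTwo {n : ℕ} {M : Finset (Finset ℕ)} :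
    M ∈ matchingsSockLeTwo n ↔ IsRMatching 2 n M ∧ sockNum n M ≤ 2 := by
  rw [matchingsSockLeTwo, mem_filter, mem_matchings]

theorem card_filter_initialArc_mem {a n : ℕ} (ha : a ∈ Icc 1 3) (hn : 1 ≤ n) :
    ((matchingsSockLeTwo (n + 1)).filter (initialArc a ∈ ·)).card =
      (matchingsSockLeTwo n).card := by
  refine card_nbij' (removeInitialArc a) (addInitialArc a) ?_ ?_ ?_ ?_
  · intro M hM
    obtain ⟨hM, hp⟩ := mem_filter.1 hM
    obtain ⟨hM, hs⟩ := mem_matchingsSockLeTwo.1 hM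
    have hR := isRMatching_removeInitialArc ha hn hM hp
    refine mem_matchingsSockLeTwo.2 ⟨hR, ?_⟩
    rwa [← sockNum_addInitialArc_le_two_iff ha hn hR, addInitialArc_removeInitialArc hM hp]
  · intro M hM
    obtain ⟨hM, hs⟩ := mem_matchingsSockLeTwo.1 hM
    refine mem_filter.2 ⟨mem_matchingsSockLeTwo.2 ⟨isRMatching_addInitialArc ha hn hM, ?_⟩,
      mem_insert_self _ _⟩
    exact (sockNum_addInitialArc_le_two_iff ha hn hM).2 hs
  · intro M hM
    obtain ⟨hM, hp⟩ := mem_filter.1 hM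
    exact addInitialArc_removeInitialArc (mem_matchingsSockLeTwo.1 hM).1 hp
  · intro M hM
    exact removeInitialArc_addInitialArc ha (mem_matchingsSockLeTwo.1 hM).1

theorem exists_initialArc_mem {m : ℕ} {M : Finset (Finset ℕ)} (hm : 2 ≤ m)
    (hM : IsRMatching 2 m M) (h3 : crossAt 3 M ≤ 2) : ∃ a ∈ Icc 1 3, initialArc a ∈ M := by
  by_contra hnone
  have hterm : ∀ e ∈ M, (e ∩ Icc 1 3).card ≤
      if (e ∩ Icc 1 3).Nonempty ∧ (e \ Icc 1 3).Nonempty then 1 else 0 := by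
    intro e he
    have hsplit := card_inter_add_card_sdiff e (Icc 1 3)
    have he2 := hM.1 e he
    split_ifs with hcross
    · have := hcross.2.card_pos
      omega
    · rw [not_and_or, not_nonempty_iff_eq_empty, not_nonempty_iff_eq_empty] at hcross
      rcases hcross with h | h
      · simp [h]
      · obtain ⟨a, ha, rfl⟩ := exists_eq_initialArc (sdiff_eq_empty_iff_subset.1 h) he2
        exact absurd ⟨a, ha, he⟩ hnone
  have := calc 3 = (Icc 1 3).card := rfl
    _ = ∑ e ∈ M, (e ∩ Icc 1 3).card :=
      ((isRMatching_iff.1 hM).sum_card_inter (Icc_subset_Icc le_rfl (by omega))).symm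
    _ ≤ _ := sum_le_sum hterm
    _ = crossAt 3 M := (card_filter _ _).symm
  omega

theorem card_matchingsSockLeTwo_succ {n : ℕ} (hn : 1 ≤ n) :
    (matchingsSockLeTwo (n + 1)).card = 3 * (matchingsSockLeTwo n).card := by
  set F := matchingsSockLeTwo (n + 1)
  have hcover : F = (Icc 1 3).biUnion fun a => F.filter (initialArc a ∈ ·) := by
    ext M
    simp only [mem_biUnion, mem_filter]
    refine ⟨fun hM => ?_, fun ⟨_, _, hM, _⟩ => hM⟩
    obtain ⟨hR, hs⟩ := mem_matchingsSockLeTwo.1 hM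
    have h3 : crossAt 3 M ≤ 2 :=
      (le_sup (f := fun k => crossAt k M) (mem_Icc.2 ⟨by omega, by omega⟩)).trans hs
    obtain ⟨a, ha, hp⟩ := exists_initialArc_mem (by omega) hR h3
    exact ⟨a, ha, hM, hp⟩
  have hdisj : (Icc 1 3 : Set ℕ).PairwiseDisjoint fun a => F.filter (initialArc a ∈ ·) := by
    intro a ha b hb hab
    rw [Function.onFun, disjoint_filter]
    intro M hM hpa hpb
    refine hab (initialArc_injOn ha hb (by_contra fun hne => ?_))
    exact not_disjoint_initialArc ha hb
      ((isRMatching_iff.1 (mem_matchingsSockLeTwo.1 hM).1).2.1 hpa hpb hne)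
  rw [hcover, card_biUnion hdisj, sum_congr rfl fun a ha => card_filter_initialArc_mem ha hn]
  simp

theorem matchings_two_one : matchings 2 1 = {{Icc 1 2}} := by
  have hcard : (Icc 1 2).card = 2 := rfl
  ext M
  rw [mem_matchings, isRMatching_iff, mul_one, mem_singleton]
  refine ⟨fun h => ?_, fun h => h ▸ hcard ▸ isBlockPartition_singleton _⟩
  exact (hcard ▸ h).eq_singleton (nonempty_Icc.2 (by norm_num))

theorem card_matchingsSockLeTwo_one : (matchingsSockLeTwo 1).card = 1 := by
  have hsock : ∀ M ∈ matchings 2 1, sockNum 1 M ≤ 2 := fun M hM =>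
    sockNum_le (isRMatching_iff.1 (mem_matchings.1 hM)).2.1 1
  rw [matchingsSockLeTwo, filter_true_of_mem hsock, matchings_two_one, card_singleton]

theorem stmt15 (n : ℕ) (hn : 1 ≤ n) :
    ((matchings 2 n).filter (fun M => sockNum n M ≤ 2)).card = 3 ^ (n - 1) := by
  induction n, hn using Nat.le_induction with
  | base => exact card_matchingsSockLeTwo_one
  | succ n hn ih =>
    change (matchingsSockLeTwo (n + 1)).card = _
    rw [card_matchingsSockLeTwo_succ hn, show (matchingsSockLeTwo n).card = _ from ih,
      Nat.add_sub_cancel, ← pow_succ', Nat.sub_add_cancel hn]
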